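/- arXiv:0902.2520 — 2 statements merged into one kernel-verified Lean document; each statement's English description precedes it below -/
import Mathlib

section
/- For all real x > 0, ψ(x+1) - log x < 1/(2x), where ψ is the digamma function. -/
open Real Filter

/-! Put `R y = ψ y - log y + 1 / (2 y)`. The recurrence `ψ (y + 1) = ψ y + 1 / y` together with the
strict trapezoid inequality for `∫_y^{y+1} dt / t` gives `R y < R (y + 1)`, and convexity of
`log Γ` gives `ψ ≤ log`, i.e. `R y ≤ 1 / (2 y)`. Hence
`R y < R (y + 1) ≤ R (y + 1 + n) ≤ 1 / (2 (y + 1 + n)) → 0`, so `R y < 0`, and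
`ψ (x + 1) - log x - 1 / (2 x) = R x`. -/

/-- The digamma function ψ(x) = Γ′(x)/Γ(x). -/
noncomputable def digamma (x : ℝ) : ℝ := deriv Real.Gamma x / Real.Gamma x

lemma hasDerivAt_log_Gamma {y : ℝ} (hy : 0 < y) :
    HasDerivAt (log ∘ Gamma) (digamma y) y :=
  (differentiableAt_Gamma fun m => ((neg_nonpos.2 m.cast_nonneg).trans_lt hy).ne').hasDerivAt.log
    (Gamma_pos_of_pos hy).ne'

lemma log_Gamma_add_one {y : ℝ} (hy : 0 < y) : log (Gamma (y + 1)) = log (Gamma y) + log y := by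
  rw [Gamma_add_one hy.ne', log_mul hy.ne' (Gamma_pos_of_pos hy).ne', add_comm]

lemma digamma_add_one {y : ℝ} (hy : 0 < y) : digamma (y + 1) = digamma y + y⁻¹ := by
  have hshift : HasDerivAt (fun t => log (Gamma (t + 1))) (digamma (y + 1)) y :=
    (hasDerivAt_log_Gamma (by linarith)).comp_add_const y 1
  have hsum : HasDerivAt (fun t => log (Gamma (t + 1))) (digamma y + y⁻¹) y :=
    ((hasDerivAt_log_Gamma hy).add (hasDerivAt_log hy.ne')).congr_of_eventuallyEq <| by
      filter_upwards [eventually_gt_nhds hy] with t ht using log_Gamma_add_one ht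
  exact hshift.unique hsum

/-- The tangent of the convex `log ∘ Gamma` at `y` lies below its chord over `[y, y + 1]`,
whose slope is `log y`. -/
lemma digamma_le_log {y : ℝ} (hy : 0 < y) : digamma y ≤ log y := by
  have h := convexOn_log_Gamma.deriv_le_slope (Set.mem_Ioi.2 hy)
    (Set.mem_Ioi.2 (by linarith : (0 : ℝ) < y + 1)) (by linarith)
    (hasDerivAt_log_Gamma hy).differentiableAt
  rwa [(hasDerivAt_log_Gamma hy).deriv, slope_def_field, Function.comp_apply, Function.comp_apply,
    log_Gamma_add_one hy, add_sub_cancel_left, add_sub_cancel_left, div_one] at h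

/-- The trapezoid rule overestimates `∫₁^{1+u} dt/t`, since `1/t` is strictly convex. -/
lemma log_one_add_lt {u : ℝ} (hu : 0 < u) : log (1 + u) < u / 2 + u / (2 * (1 + u)) := by
  set g : ℝ → ℝ := fun v => v + 1 - (1 + v)⁻¹ - 2 * log (1 + v)
  have hg : ∀ v : ℝ, 0 ≤ v → HasDerivAt g ((1 - (1 + v)⁻¹) ^ 2) v := by
    intro v hv
    have h1 : (1 : ℝ) + v ≠ 0 := by positivity
    have hlin := (hasDerivAt_id v).const_add 1
    refine ((((hasDerivAt_id v).add_const 1).sub (hlin.inv h1)).sub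
      ((hlin.log h1).const_mul 2)).congr_deriv ?_
    simp only [id]
    field_simp
    ring
  have hmono : StrictMonoOn g (Set.Ici 0) := by
    refine strictMonoOn_of_deriv_pos (convex_Ici 0)
      (fun v hv => (hg v hv).continuousAt.continuousWithinAt) fun v hv => ?_
    rw [interior_Ici, Set.mem_Ioi] at hv
    rw [(hg v hv.le).deriv]
    exact pow_pos (sub_pos.2 (inv_lt_one_of_one_lt₀ (by linarith))) 2
  have hpos : g 0 < g u := hmono Set.self_mem_Ici hu.le hu
  have hsplit : u / (2 * (1 + u)) = 1 / 2 - (1 + u)⁻¹ / 2 := by field_simp; ring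
  simp only [g, add_zero, inv_one, log_one, mul_zero] at hpos
  linarith

noncomputable def digammaRemainder (y : ℝ) : ℝ := digamma y - log y + 1 / (2 * y)

lemma digammaRemainder_lt_add_one {y : ℝ} (hy : 0 < y) :
    digammaRemainder y < digammaRemainder (y + 1) := by
  have htrap := log_one_add_lt (inv_pos.2 hy)
  rw [show 1 + y⁻¹ = (y + 1) / y by field_simp, log_div (by linarith) hy.ne',
    show y⁻¹ / 2 + y⁻¹ / (2 * ((y + 1) / y)) = 1 / (2 * y) + 1 / (2 * (y + 1)) by
      field_simp] at htrap
  have hinv : y⁻¹ = 1 / (2 * y) + 1 / (2 * y) := by field_simp; norm_num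
  simp only [digammaRemainder, digamma_add_one hy]
  linarith

lemma digammaRemainder_le {y : ℝ} (hy : 0 < y) : digammaRemainder y ≤ 1 / (2 * y) := by
  simpa [digammaRemainder] using digamma_le_log hy

lemma digammaRemainder_neg {y : ℝ} (hy : 0 < y) : digammaRemainder y < 0 := by
  have hmono : Monotone fun n : ℕ => digammaRemainder (y + 1 + n) :=
    monotone_nat_of_le_succ fun n => by
      simpa [add_assoc] using (digammaRemainder_lt_add_one (by positivity : 0 < y + 1 + n)).le
  have hlim : Tendsto (fun n : ℕ => 1 / (2 * (y + 1 + n))) atTop (nhds 0) :=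
    tendsto_const_nhds.div_atTop <| (tendsto_atTop_add_const_left _ _
      tendsto_natCast_atTop_atTop).const_mul_atTop two_pos
  have hsucc : digammaRemainder (y + 1) ≤ 0 := ge_of_tendsto' hlim fun n =>
    (show digammaRemainder (y + 1) ≤ digammaRemainder (y + 1 + n) by
      simpa using hmono (Nat.zero_le n)).trans (digammaRemainder_le (by positivity))
  exact (digammaRemainder_lt_add_one hy).trans_le hsucc

theorem digamma_succ_sub_log_lt (x : ℝ) (hx : 0 < x) :
    digamma (x + 1) - Real.log x < 1 / (2 * x) := by
  have hneg := digammaRemainder_neg hx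
  have hinv : x⁻¹ = 1 / (2 * x) + 1 / (2 * x) := by field_simp; norm_num
  rw [digamma_add_one hx]
  simp only [digammaRemainder] at hneg
  linarith
end

section
/- For all real x > 0, 1/(2x²) - 1/(6x³) < 1/x - ψ'(x+1) < 1/(2x²) - 1/(6x³) + 1/(30x⁵), where ψ' is the trigamma function. -/
/-!
Convexity of `log Γ` makes `ψ` monotone, so `ψ' ≥ 0`, and iterating `ψ'(x) = ψ'(x+1) + 1/x²`
gives `ψ'(x) ≥ ∑ₙ 1/(x+n)²`. Hence `ψ` minus the series `∑ₙ (1/(n+1) - 1/(x+n))` is monotone;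
both satisfy `f(x+1) = f(x) + 1/x`, so the difference is also 1-periodic, hence constant, and
`ψ'(x) = ∑ₙ 1/(x+n)²`. Therefore `1/x - ψ'(x+1) = ∑ₙ 1/((x+n)(x+n+1)²)`, and for the two
truncations `f` of the asymptotic expansion the telescoping terms `f(t) - f(t+1)` lie strictly
below, resp. above, `1/(t(t+1)²)` for every `t > 0`.
-/

open Real Filter

open Set Topology Finset

lemma Real.analyticAt_Gamma {x : ℝ} (hx : ∀ m : ℕ, x ≠ -m) : AnalyticAt ℝ Gamma x := by
  have hxC : ∀ m : ℕ, (x : ℂ) ≠ -m := fun m h => hx m (by exact_mod_cast h)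
  have hC : AnalyticAt ℂ Complex.Gamma x := by
    have h := (Complex.differentiable_one_div_Gamma.analyticAt (x : ℂ)).inv
      (inv_ne_zero (Complex.Gamma_ne_zero hxC))
    simpa only [Pi.inv_def, inv_inv] using h
  exact hC.re_ofReal

lemma analyticAt_digamma {x : ℝ} (hx : ∀ m : ℕ, x ≠ -m) : AnalyticAt ℝ digamma x :=
  (analyticAt_Gamma hx).deriv.div (analyticAt_Gamma hx) (Gamma_ne_zero hx)

lemma Real.deriv_Gamma_add_one {x : ℝ} (hx : ∀ m : ℕ, x ≠ -m) :
    deriv Gamma (x + 1) = Gamma x + x * deriv Gamma x := by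
  have hx0 : x ≠ 0 := by simpa using hx 0
  have hmul : HasDerivAt (fun y => y * Gamma y) (1 * Gamma x + x * deriv Gamma x) x :=
    (hasDerivAt_id x).mul (differentiableAt_Gamma hx).hasDerivAt
  have hshift : (fun y => Gamma (y + 1)) =ᶠ[𝓝 x] fun y => y * Gamma y := by
    filter_upwards [eventually_ne_nhds hx0] with y hy using Gamma_add_one hy
  rw [← deriv_comp_add_const, hshift.deriv_eq, hmul.deriv, one_mul]

lemma digamma_add_one_s3 {x : ℝ} (hx : ∀ m : ℕ, x ≠ -m) :
    digamma (x + 1) = digamma x + 1 / x := by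
  have hx0 : x ≠ 0 := by simpa using hx 0
  have hΓ : Gamma x ≠ 0 := Gamma_ne_zero hx
  rw [digamma, digamma, deriv_Gamma_add_one hx, Gamma_add_one hx0]
  field_simp
  ring

lemma deriv_digamma_add_one {x : ℝ} (hx : 0 < x) :
    deriv digamma (x + 1) = deriv digamma x - 1 / x ^ 2 := by
  have hshift : (fun y => digamma (y + 1)) =ᶠ[𝓝 x] fun y => digamma y + y⁻¹ := by
    filter_upwards [eventually_gt_nhds hx] with y hy
    rw [digamma_add_one_s3 (by bound), one_div]
  rw [← deriv_comp_add_const, hshift.deriv_eq,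
    deriv_fun_add (analyticAt_digamma (by bound)).differentiableAt (differentiableAt_inv hx.ne'),
    deriv_inv, one_div, sub_eq_add_neg]

lemma monotoneOn_digamma : MonotoneOn digamma (Ioi 0) := by
  refine (convexOn_log_Gamma.monotoneOn_deriv fun x hx => ?_).congr fun x hx => ?_
  · exact (differentiableAt_Gamma (by bound [mem_Ioi.mp hx])).log (Gamma_pos_of_pos hx).ne'
  · exact deriv.log (differentiableAt_Gamma (by bound [mem_Ioi.mp hx])) (Gamma_pos_of_pos hx).ne'

lemma deriv_digamma_nonneg {x : ℝ} (hx : 0 < x) : 0 ≤ deriv digamma x := by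
  rw [← derivWithin_of_isOpen isOpen_Ioi hx]
  exact monotoneOn_digamma.derivWithin_nonneg

lemma tendsto_sum_range_sub_add_one {E : Type*} [AddCommGroup E] [TopologicalSpace E]
    [IsTopologicalAddGroup E] {f : ℝ → E} (hf : Tendsto f atTop (𝓝 0)) (x : ℝ) :
    Tendsto (fun N : ℕ => ∑ n ∈ range N, (f (x + n) - f (x + n + 1))) atTop (𝓝 (f x)) := by
  have hsum (N : ℕ) : ∑ n ∈ range N, (f (x + n) - f (x + n + 1)) = f x - f (x + N) := by
    simpa [add_assoc] using sum_range_sub' (fun n : ℕ => f (x + n)) N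
  simp_rw [hsum]
  simpa using tendsto_const_nhds.sub
    (hf.comp (tendsto_atTop_add_const_left _ x tendsto_natCast_atTop_atTop))

lemma hasSum_one_div_sub_one_div_add_one {x : ℝ} (hx : 0 < x) :
    HasSum (fun n : ℕ => 1 / (x + n) - 1 / (x + n + 1)) (1 / x) := by
  refine (hasSum_iff_tendsto_nat_of_nonneg (fun n => ?_) _).mpr ?_
  · exact sub_nonneg.mpr (one_div_le_one_div_of_le (by positivity) (by linarith))
  · simpa only [one_div] using tendsto_sum_range_sub_add_one tendsto_inv_atTop_zero x

lemma lt_of_sub_lt_of_hasSum {f : ℝ → ℝ} (hf : Tendsto f atTop (𝓝 0)) {x L : ℝ} {a : ℕ → ℝ}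
    (ha : HasSum a L) (hlt : ∀ n : ℕ, f (x + n) - f (x + n + 1) < a n) : f x < L := by
  have hgap : HasSum (fun n : ℕ => a n - (f (x + n) - f (x + n + 1))) (L - f x) := by
    refine (hasSum_iff_tendsto_nat_of_nonneg (fun n => (sub_pos.mpr (hlt n)).le) _).mpr ?_
    exact (ha.tendsto_sum_nat.sub (tendsto_sum_range_sub_add_one hf x)).congr fun N =>
      (sum_sub_distrib _ _).symm
  exact sub_pos.mp (hasSum_lt (f := 0) (fun n => (sub_pos.mpr (hlt n)).le)
    (sub_pos.mpr (hlt 0)) hasSum_zero hgap)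

lemma lt_of_lt_sub_of_hasSum {f : ℝ → ℝ} (hf : Tendsto f atTop (𝓝 0)) {x L : ℝ} {a : ℕ → ℝ}
    (ha : HasSum a L) (hlt : ∀ n : ℕ, a n < f (x + n) - f (x + n + 1)) : L < f x := by
  have h := lt_of_sub_lt_of_hasSum (f := fun t => -f t) (x := x) (by simpa using hf.neg) ha.neg
    fun n => by linarith [hlt n]
  linarith

lemma tendsto_one_div_mul_pow_atTop_zero {c : ℝ} (hc : 0 < c) {k : ℕ} (hk : k ≠ 0) :
    Tendsto (fun t : ℝ => 1 / (c * t ^ k)) atTop (𝓝 0) := by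
  simpa only [one_div, Pi.inv_def] using
    ((tendsto_pow_atTop hk).const_mul_atTop hc).inv_tendsto_atTop

noncomputable def trigammaSeries (x : ℝ) : ℝ := ∑' n : ℕ, 1 / (x + n) ^ 2

lemma summable_one_div_add_sq {x : ℝ} (hx : 0 < x) : Summable fun n : ℕ => 1 / (x + n) ^ 2 := by
  refine ((summable_one_div_nat_add_rpow x 2).mpr one_lt_two).congr fun n => ?_
  rw [abs_of_pos (by positivity), rpow_two, add_comm]

lemma deriv_digamma_eq_sum_range_add {x : ℝ} (hx : 0 < x) (N : ℕ) :
    deriv digamma x = ∑ k ∈ range N, 1 / (x + k) ^ 2 + deriv digamma (x + N) := by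
  induction N with
  | zero => simp
  | succ N ih =>
    rw [ih, sum_range_succ, Nat.cast_succ, ← add_assoc, deriv_digamma_add_one (by positivity)]
    ring

lemma trigammaSeries_le_deriv_digamma {x : ℝ} (hx : 0 < x) :
    trigammaSeries x ≤ deriv digamma x :=
  tsum_le_of_sum_range_le (fun n => by positivity) fun N => by
    rw [deriv_digamma_eq_sum_range_add hx N]
    linarith [deriv_digamma_nonneg (x := x + N) (by positivity)]

-- The series of `ψ + γ`.
noncomputable def digammaSeries (x : ℝ) : ℝ := ∑' n : ℕ, (1 / (n + 1) - 1 / (x + n))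

lemma hasDerivAt_digammaSeries_term (n : ℕ) {y : ℝ} (hy : 0 < y) :
    HasDerivAt (fun z : ℝ => 1 / (n + 1) - 1 / (z + n)) (1 / (y + n) ^ 2) y := by
  have h := (((hasDerivAt_id y).add_const (n : ℝ)).inv (by positivity)).const_sub (1 / (n + 1 : ℝ))
  simpa [one_div, neg_div] using h

lemma summable_and_hasDerivAt_digammaSeries {x : ℝ} (hx : 0 < x) :
    (Summable fun n : ℕ => 1 / (n + 1) - 1 / (x + n)) ∧
      HasDerivAt digammaSeries (trigammaSeries x) x := by
  have hm : 0 < min x 1 := lt_min hx one_pos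
  set ε := min x 1 / 2
  have hε : 0 < ε := half_pos hm
  have hmem {y : ℝ} (hy : min x 1 ≤ y) : y ∈ Ioi ε := (half_lt_self hm).trans_le hy
  have hderiv (n : ℕ) (y : ℝ) (hy : y ∈ Ioi ε) :
      HasDerivAt (fun z : ℝ => 1 / (n + 1) - 1 / (z + n)) (1 / (y + n) ^ 2) y :=
    hasDerivAt_digammaSeries_term n (hε.trans hy)
  have hbound (n : ℕ) (y : ℝ) (hy : y ∈ Ioi ε) : ‖1 / (y + n) ^ 2‖ ≤ 1 / (ε + n) ^ 2 := by
    rw [norm_of_nonneg (by have := hε.trans (mem_Ioi.mp hy); positivity)]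
    gcongr
    exact (mem_Ioi.mp hy).le
  have hx1 : x ∈ Ioi ε := hmem (min_le_left _ _)
  have h1 : (1 : ℝ) ∈ Ioi ε := hmem (min_le_right _ _)
  have hzero : Summable fun n : ℕ => 1 / ((n : ℝ) + 1) - 1 / (1 + n) := by
    simp only [add_comm (1 : ℝ), sub_self]; exact summable_zero
  have hsummable := summable_of_summable_hasDerivAt_of_isPreconnected
    (summable_one_div_add_sq hε) isOpen_Ioi isPreconnected_Ioi hderiv hbound h1 hzero hx1
  have hderivAt := hasDerivAt_tsum_of_isPreconnected
    (summable_one_div_add_sq hε) isOpen_Ioi isPreconnected_Ioi hderiv hbound h1 hzero hx1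
  exact ⟨hsummable, hderivAt⟩

lemma digammaSeries_add_one {x : ℝ} (hx : 0 < x) :
    digammaSeries (x + 1) = digammaSeries x + 1 / x := by
  have h := ((summable_and_hasDerivAt_digammaSeries (x := x + 1) (by positivity)).1.hasSum.sub
    (summable_and_hasDerivAt_digammaSeries hx).1.hasSum)
  have hterm : (fun n : ℕ => (1 / ((n : ℝ) + 1) - 1 / (x + 1 + n)) - (1 / (n + 1) - 1 / (x + n)))
      = fun n : ℕ => 1 / (x + n) - 1 / (x + n + 1) := by
    funext n; ring_nf
  rw [hterm] at h
  unfold digammaSeries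
  linarith [h.unique (hasSum_one_div_sub_one_div_add_one hx)]

lemma eq_of_monotoneOn_Ioi_of_add_one_eq {f : ℝ → ℝ} (hmono : MonotoneOn f (Ioi 0))
    (hper : ∀ x > 0, f (x + 1) = f x) {a b : ℝ} (ha : 0 < a) (hb : 0 < b) : f a = f b := by
  have hshift (x : ℝ) (hx : 0 < x) (N : ℕ) : f (x + N) = f x := by
    induction N with
    | zero => simp
    | succ N ih => rw [Nat.cast_succ, ← add_assoc, hper _ (by positivity), ih]
  have hle {a b : ℝ} (ha : 0 < a) (hb : 0 < b) : f a ≤ f b := by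
    obtain ⟨N, hN⟩ := exists_nat_ge (a - b)
    rw [← hshift b hb N]
    exact hmono ha (mem_Ioi.mpr (by positivity)) (by linarith)
  exact le_antisymm (hle ha hb) (hle hb ha)

lemma deriv_digamma_eq_trigammaSeries {x : ℝ} (hx : 0 < x) :
    deriv digamma x = trigammaSeries x := by
  set D : ℝ → ℝ := fun y => digamma y - digammaSeries y
  have hD {y : ℝ} (hy : 0 < y) : HasDerivAt D (deriv digamma y - trigammaSeries y) y :=
    (analyticAt_digamma (by bound)).differentiableAt.hasDerivAt.sub
      (summable_and_hasDerivAt_digammaSeries hy).2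
  have hmono : MonotoneOn D (Ioi 0) := by
    refine monotoneOn_of_hasDerivWithinAt_nonneg (convex_Ioi 0)
      (fun y hy => (hD hy).continuousAt.continuousWithinAt)
      (fun y hy => (hD (interior_subset hy)).hasDerivWithinAt)
      fun y hy => sub_nonneg.mpr (trigammaSeries_le_deriv_digamma (interior_subset hy))
  have hper (y : ℝ) (hy : 0 < y) : D (y + 1) = D y := by
    simp only [D, digamma_add_one_s3 (by bound), digammaSeries_add_one hy]
    ring
  have hconst : D =ᶠ[𝓝 x] fun _ => D x := by
    filter_upwards [eventually_gt_nhds hx] with y hy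
    exact eq_of_monotoneOn_Ioi_of_add_one_eq hmono hper hy hx
  linarith [(hD hx).unique ((hasDerivAt_const x (D x)).congr_of_eventuallyEq hconst)]

lemma hasSum_one_div_sub_trigammaSeries_add_one {x : ℝ} (hx : 0 < x) :
    HasSum (fun n : ℕ => 1 / ((x + n) * (x + n + 1) ^ 2)) (1 / x - trigammaSeries (x + 1)) := by
  have h := (hasSum_one_div_sub_one_div_add_one hx).sub
    (summable_one_div_add_sq (x := x + 1) (by positivity)).hasSum
  refine h.congr_fun fun n => ?_
  have : 0 < x + n := by positivity
  field_simp
  ring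

-- Truncations of the asymptotic expansion `1/x - ψ'(x+1) ~ 1/(2x²) - 1/(6x³) + 1/(30x⁵) - ⋯`.
noncomputable def asymptoticLower (t : ℝ) : ℝ := 1 / (2 * t ^ 2) - 1 / (6 * t ^ 3)

noncomputable def asymptoticUpper (t : ℝ) : ℝ := asymptoticLower t + 1 / (30 * t ^ 5)

lemma tendsto_asymptoticLower : Tendsto asymptoticLower atTop (𝓝 0) := by
  have h := (tendsto_one_div_mul_pow_atTop_zero two_pos two_ne_zero).sub
    (tendsto_one_div_mul_pow_atTop_zero (by norm_num : (0 : ℝ) < 6) three_ne_zero)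
  rw [sub_zero] at h
  exact h

lemma tendsto_asymptoticUpper : Tendsto asymptoticUpper atTop (𝓝 0) := by
  have h := tendsto_asymptoticLower.add
    (tendsto_one_div_mul_pow_atTop_zero (by norm_num : (0 : ℝ) < 30) (by norm_num : 5 ≠ 0))
  rw [add_zero] at h
  exact h

lemma asymptoticLower_sub_lt {t : ℝ} (ht : 0 < t) :
    asymptoticLower t - asymptoticLower (t + 1) < 1 / (t * (t + 1) ^ 2) := by
  have hgap : 1 / (t * (t + 1) ^ 2) - (asymptoticLower t - asymptoticLower (t + 1))
      = 1 / (6 * t ^ 3 * (t + 1) ^ 3) := by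
    unfold asymptoticLower
    field_simp
    ring
  linarith [show 0 < 1 / (6 * t ^ 3 * (t + 1) ^ 3) by positivity]

lemma lt_asymptoticUpper_sub {t : ℝ} (ht : 0 < t) :
    1 / (t * (t + 1) ^ 2) < asymptoticUpper t - asymptoticUpper (t + 1) := by
  have hgap : asymptoticUpper t - asymptoticUpper (t + 1) - 1 / (t * (t + 1) ^ 2)
      = (5 * t ^ 2 + 5 * t + 1) / (30 * t ^ 5 * (t + 1) ^ 5) := by
    unfold asymptoticUpper asymptoticLower
    field_simp
    ring
  linarith [show 0 < (5 * t ^ 2 + 5 * t + 1) / (30 * t ^ 5 * (t + 1) ^ 5) by positivity]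

theorem trigamma_succ_bounds (x : ℝ) (hx : 0 < x) :
    1 / (2 * x ^ 2) - 1 / (6 * x ^ 3) < 1 / x - deriv digamma (x + 1) ∧
    1 / x - deriv digamma (x + 1) < 1 / (2 * x ^ 2) - 1 / (6 * x ^ 3) + 1 / (30 * x ^ 5) := by
  have hsum := hasSum_one_div_sub_trigammaSeries_add_one hx
  rw [deriv_digamma_eq_trigammaSeries (by positivity)]
  exact ⟨lt_of_sub_lt_of_hasSum tendsto_asymptoticLower hsum
      fun n => asymptoticLower_sub_lt (by positivity),
    lt_of_lt_sub_of_hasSum tendsto_asymptoticUpper hsum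
      fun n => lt_asymptoticUpper_sub (by positivity)⟩
end
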